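/- Let α > −1, 2 < p < ∞, φ(p) = (p−2)/(p−1), and let w ∈ B_{p,α}. For any nonnegative measurable h on the upper half plane, the pair of weights (h w, S_{w,α}(h) w) satisfies the joint B_{2,α} condition with B_{2,α}(h w, S_{w,α}(h) w) ≤ B_{p,α}(w)^{1/(p−1)}, where S_{w,α}(h) = (M_α(h^{1/φ(p)} w)/w)^{φ(p)}. -/

import Mathlib

open MeasureTheory ENNReal

noncomputable section

/-- The upper half plane. -/
def UHP : Set ℂ := {z | 0 < z.im}

/-- The measure `dA_α = (Im z)^α dA` on the upper half plane. -/
def measA (α : ℝ) : Measure ℂ :=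
  (volume.restrict UHP).withDensity fun z => ENNReal.ofReal (z.im ^ α)

/-- The Carleson box `Q_{[a,b)} = [a,b) × (0, b-a]`. -/
def cbox (a b : ℝ) : Set ℂ := {z | a ≤ z.re ∧ z.re < b ∧ 0 < z.im ∧ z.im ≤ b - a}

/-- The maximal function `M_α f(z) = sup_{I : z ∈ Q_I} |Q_I|_α^{-1} ∫_{Q_I} f dA_α`
(on nonnegative functions). -/
def maxA (α : ℝ) (f : ℂ → ℝ≥0∞) (z : ℂ) : ℝ≥0∞ :=
  ⨆ (a : ℝ) (b : ℝ) (_ : a < b) (_ : z ∈ cbox a b),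
    (∫⁻ ξ in cbox a b, f ξ ∂measA α) / measA α (cbox a b)

/-- The operator `S_{w,α}(h) = (M_α(h^{1/φ(p)} w)/w)^{φ(p)}` with `φ(p) = (p-2)/(p-1)`. -/
def Sop (α p : ℝ) (w : ℂ → ℝ) (h : ℂ → ℝ≥0∞) (z : ℂ) : ℝ≥0∞ :=
  ((maxA α (fun ξ => h ξ ^ (1 / ((p - 2) / (p - 1))) * ENNReal.ofReal (w ξ)) z) /
      ENNReal.ofReal (w z)) ^ ((p - 2) / (p - 1))

/-!
Fix a box `Q`, put `q = φ(p) = (p-2)/(p-1)`, so that `1 - q = 1/(p-1)` and `1 - p' = -(1 - q)`,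
and let `g = h^{1/q} w`. On `Q` we have `M_α g ≥ ⟨g⟩_Q`, hence `S_{w,α}(h) w ≥ ⟨g⟩_Q^q w^{1-q}`,
while Hölder's inequality with exponents `1/q`, `1/(1-q)` gives
`⟨h w⟩_Q ≤ ⟨g⟩_Q^q ⟨w⟩_Q^{1-q}`. In the product the powers of `⟨g⟩_Q` cancel, leaving
`⟨w⟩_Q^{1-q} ⟨w^{1-p'}⟩_Q = (⟨w⟩_Q ⟨w^{1-p'}⟩_Q^{p-1})^{1/(p-1)} ≤ B_{p,α}(w)^{1/(p-1)}`.
-/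

lemma measurableSet_cbox (a b : ℝ) : MeasurableSet (cbox a b) :=
  (measurableSet_le measurable_const Complex.measurable_re).inter <|
    (measurableSet_lt Complex.measurable_re measurable_const).inter <|
      (measurableSet_lt measurable_const Complex.measurable_im).inter
        (measurableSet_le Complex.measurable_im measurable_const)

lemma setLIntegral_div_le_maxA (α : ℝ) (f : ℂ → ℝ≥0∞) {a b : ℝ} (hab : a < b) {z : ℂ}
    (hz : z ∈ cbox a b) :
    (∫⁻ ξ in cbox a b, f ξ ∂measA α) / measA α (cbox a b) ≤ maxA α f z :=
  le_iSup_of_le a <| le_iSup_of_le b <| le_iSup_of_le hab <| le_iSup_of_le hz le_rfl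

namespace ENNReal

lemma div_rpow_mul_self {x : ℝ≥0∞} (y : ℝ≥0∞) (hx0 : x ≠ 0) (hxt : x ≠ ⊤) {q : ℝ}
    (hq : 0 ≤ q) : (y / x) ^ q * x = y ^ q * x ^ (1 - q) := by
  rw [div_rpow_of_nonneg _ _ hq, rpow_sub _ _ hx0 hxt, rpow_one]
  simp only [div_eq_mul_inv]
  ring

variable {X : Type*} [MeasurableSpace X] {μ : Measure X} {h w : X → ℝ≥0∞} {q : ℝ}

lemma lintegral_mul_le_rpow_mul_rpow_of_aemeasurable (hh : AEMeasurable h μ)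
    (hw : AEMeasurable w μ) (hq0 : 0 < q) (hq1 : q ≤ 1) :
    ∫⁻ x, h x * w x ∂μ ≤ (∫⁻ x, h x ^ (1 / q) * w x ∂μ) ^ q * (∫⁻ x, w x ∂μ) ^ (1 - q) := by
  have split : ∀ x, h x * w x = (h x ^ (1 / q) * w x) ^ q * w x ^ (1 - q) := fun x => by
    rw [mul_rpow_of_nonneg _ _ hq0.le, ← rpow_mul, one_div_mul_cancel hq0.ne', rpow_one,
      mul_assoc, ← rpow_add_of_nonneg _ _ hq0.le (by linarith), add_sub_cancel, rpow_one]
  simp only [split]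
  exact lintegral_mul_norm_pow_le ((hh.pow_const _).mul hw) hw hq0.le (by linarith)
    (add_sub_cancel _ _)

lemma lintegral_mul_le_rpow_mul_rpow (hh : Measurable h) (hh_fin : ∀ᵐ x ∂μ, h x ≠ ⊤)
    (hq0 : 0 < q) (hq1 : q ≤ 1) :
    ∫⁻ x, h x * w x ∂μ ≤ (∫⁻ x, h x ^ (1 / q) * w x ∂μ) ^ q * (∫⁻ x, w x ∂μ) ^ (1 - q) := by
  -- `w` need not be measurable: pass to a measurable minorant `φ` of `h * w` with the same
  -- integral and to the measurable weight `w₁ = φ / h ≤ w`, which needs `h < ∞` a.e.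
  obtain ⟨φ, hφ, hφ_le, hφ_eq⟩ := exists_measurable_le_lintegral_eq μ fun x => h x * w x
  let w₁ : X → ℝ≥0∞ := fun x => if h x = 0 then 0 else φ x / h x
  have hw₁ : Measurable w₁ :=
    Measurable.ite (hh (measurableSet_singleton 0)) measurable_const (hφ.div hh)
  have hw₁_le : ∀ x, w₁ x ≤ w x := fun x => by
    by_cases hx : h x = 0
    · simp [w₁, hx]
    · simpa [w₁, hx] using div_le_of_le_mul' (hφ_le x)
  have hφ_ae : ∀ᵐ x ∂μ, φ x = h x * w₁ x := by
    filter_upwards [hh_fin] with x hx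
    by_cases hx0 : h x = 0
    · simpa [w₁, hx0] using hφ_le x
    · simp [w₁, hx0, ENNReal.mul_div_cancel hx0 hx]
  calc ∫⁻ x, h x * w x ∂μ = ∫⁻ x, h x * w₁ x ∂μ := hφ_eq.trans (lintegral_congr_ae hφ_ae)
    _ ≤ (∫⁻ x, h x ^ (1 / q) * w₁ x ∂μ) ^ q * (∫⁻ x, w₁ x ∂μ) ^ (1 - q) :=
      lintegral_mul_le_rpow_mul_rpow_of_aemeasurable hh.aemeasurable hw₁.aemeasurable hq0 hq1
    _ ≤ _ := by gcongr with x x <;> exact hw₁_le x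

lemma ae_ne_top_of_lintegral_rpow_mul_ne_top (hh : Measurable h) (hw : ∀ x, w x ≠ 0)
    (hq0 : 0 < q) (hfin : ∫⁻ x, h x ^ (1 / q) * w x ∂μ ≠ ⊤) : ∀ᵐ x ∂μ, h x ≠ ⊤ := by
  have hE : MeasurableSet {x | h x = ⊤} := hh (measurableSet_singleton ⊤)
  have : ⊤ * μ {x | h x = ⊤} ≤ ∫⁻ x, h x ^ (1 / q) * w x ∂μ := by
    rw [← setLIntegral_const]
    refine (setLIntegral_mono' hE fun x hx => ?_).trans (setLIntegral_le_lintegral _ _)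
    rw [show h x = ⊤ from hx, top_rpow_of_pos (one_div_pos.mpr hq0), top_mul (hw x)]
  rw [ae_iff]
  simp only [ne_eq, not_not]
  by_contra hE0
  exact ne_top_of_le_ne_top hfin this (top_mul hE0)

lemma lintegral_mul_lintegral_inv_le {T : X → ℝ≥0∞} (hh : Measurable h) (hw0 : ∀ x, w x ≠ 0)
    (hwt : ∀ x, w x ≠ ⊤) (hq0 : 0 < q) (hq1 : q ≤ 1)
    (hT : ∀ᵐ x ∂μ, (∫⁻ y, h y ^ (1 / q) * w y ∂μ) ^ q * w x ^ (1 - q) ≤ T x) :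
    (∫⁻ x, h x * w x ∂μ) * ∫⁻ x, (T x)⁻¹ ∂μ ≤
      (∫⁻ x, w x ∂μ) ^ (1 - q) * ∫⁻ x, w x ^ (-(1 - q)) ∂μ := by
  set G := ∫⁻ y, h y ^ (1 / q) * w y ∂μ
  have hw_rpow : ∀ x, w x ^ (1 - q) ≠ 0 := fun x =>
    (rpow_pos (pos_iff_ne_zero.mpr (hw0 x)) (hwt x)).ne'
  rcases eq_or_ne G ⊤ with hG_top | hG_top
  · have hT_top : ∀ᵐ x ∂μ, (T x)⁻¹ = 0 := by
      filter_upwards [hT] with x hx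
      rw [hG_top, top_rpow_of_pos hq0, top_mul (hw_rpow x), top_le_iff] at hx
      rw [hx, inv_top]
    simp [lintegral_congr_ae hT_top]
  have hHolder : ∫⁻ x, h x * w x ∂μ ≤ G ^ q * (∫⁻ x, w x ∂μ) ^ (1 - q) :=
    lintegral_mul_le_rpow_mul_rpow hh (ae_ne_top_of_lintegral_rpow_mul_ne_top hh hw0 hq0 hG_top)
      hq0 hq1
  rcases eq_or_ne G 0 with hG0 | hG0
  · rw [hG0, zero_rpow_of_pos hq0, zero_mul, nonpos_iff_eq_zero] at hHolder
    simp [hHolder]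
  have hGq0 : G ^ q ≠ 0 := (rpow_pos (pos_iff_ne_zero.mpr hG0) hG_top).ne'
  have hGqt : G ^ q ≠ ⊤ := rpow_ne_top_of_ne_zero hG0 hG_top
  have hT_inv : ∫⁻ x, (T x)⁻¹ ∂μ ≤ (G ^ q)⁻¹ * ∫⁻ x, w x ^ (-(1 - q)) ∂μ := by
    rw [← lintegral_const_mul' _ _ (inv_ne_top.mpr hGq0)]
    refine lintegral_mono_ae ?_
    filter_upwards [hT] with x hx
    rw [rpow_neg, ← ENNReal.mul_inv (Or.inl hGq0) (Or.inl hGqt)]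
    exact ENNReal.inv_le_inv' hx
  calc (∫⁻ x, h x * w x ∂μ) * ∫⁻ x, (T x)⁻¹ ∂μ
      ≤ (G ^ q * (∫⁻ x, w x ∂μ) ^ (1 - q)) * ((G ^ q)⁻¹ * ∫⁻ x, w x ^ (-(1 - q)) ∂μ) :=
        mul_le_mul' hHolder hT_inv
    _ = (∫⁻ x, w x ∂μ) ^ (1 - q) * ∫⁻ x, w x ^ (-(1 - q)) ∂μ := by
        rw [mul_mul_mul_comm, mul_comm (G ^ q), ENNReal.inv_mul_cancel hGq0 hGqt, one_mul]

end ENNReal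

theorem joint_B2_bound_general (α p : ℝ) (hp : 2 < p)
    (w : ℂ → ℝ) (hw : ∀ z, 0 < w z) (B : ℝ≥0∞)
    (hB : ∀ a b : ℝ, a < b →
      ((∫⁻ z in cbox a b, ENNReal.ofReal (w z) ∂measA α) / measA α (cbox a b)) *
          (((∫⁻ z in cbox a b, (ENNReal.ofReal (w z)) ^ (1 - p / (p - 1)) ∂measA α) /
            measA α (cbox a b)) ^ (p - 1)) ≤ B)
    (h : ℂ → ℝ≥0∞) (hmeas : Measurable h) :
    ∀ a b : ℝ, a < b →
      ((∫⁻ z in cbox a b, h z * ENNReal.ofReal (w z) ∂measA α) / measA α (cbox a b)) *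
          ((∫⁻ z in cbox a b, (Sop α p w h z * ENNReal.ofReal (w z))⁻¹ ∂measA α) /
            measA α (cbox a b)) ≤ B ^ (1 / (p - 1)) := by
  intro a b hab
  set q := (p - 2) / (p - 1)
  have hp1 : 0 < p - 1 := by linarith
  have hq0 : 0 < q := div_pos (by linarith) hp1
  have hq1 : q ≤ 1 := (div_le_one hp1).mpr (by linarith)
  have h1q : 1 - q = 1 / (p - 1) := by simp only [q]; field_simp; ring
  have hexp : 1 - p / (p - 1) = -(1 - q) := by rw [h1q]; field_simp; ring
  have hw0 : ∀ z, ENNReal.ofReal (w z) ≠ 0 := fun z => (ENNReal.ofReal_pos.mpr (hw z)).ne'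
  set ν := (measA α (cbox a b))⁻¹ • (measA α).restrict (cbox a b)
  have average_eq : ∀ f : ℂ → ℝ≥0∞,
      (∫⁻ z in cbox a b, f z ∂measA α) / measA α (cbox a b) = ∫⁻ z, f z ∂ν := fun f => by
    simp [ν, div_eq_mul_inv, mul_comm]
  have hBab := hB a b hab
  simp only [average_eq, hexp] at hBab ⊢
  have hT : ∀ᵐ z ∂ν, (∫⁻ ξ, h ξ ^ (1 / q) * ENNReal.ofReal (w ξ) ∂ν) ^ q *
      ENNReal.ofReal (w z) ^ (1 - q) ≤ Sop α p w h z * ENNReal.ofReal (w z) := by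
    refine Measure.ae_smul_measure
      (ae_restrict_of_forall_mem (measurableSet_cbox a b) fun z hz => ?_) _
    rw [← div_rpow_mul_self _ (hw0 z) ENNReal.ofReal_ne_top hq0.le, ← average_eq, Sop]
    gcongr
    exact setLIntegral_div_le_maxA α _ hab hz
  calc _ ≤ (∫⁻ z, ENNReal.ofReal (w z) ∂ν) ^ (1 - q) *
        ∫⁻ z, ENNReal.ofReal (w z) ^ (-(1 - q)) ∂ν :=
        lintegral_mul_lintegral_inv_le hmeas hw0 (fun _ => ENNReal.ofReal_ne_top) hq0 hq1 hT
    _ = ((∫⁻ z, ENNReal.ofReal (w z) ∂ν) *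
        (∫⁻ z, ENNReal.ofReal (w z) ^ (-(1 - q)) ∂ν) ^ (p - 1)) ^ (1 / (p - 1)) := by
        rw [ENNReal.mul_rpow_of_nonneg _ _ (by positivity), ← ENNReal.rpow_mul,
          mul_one_div_cancel hp1.ne', ENNReal.rpow_one, h1q]
    _ ≤ B ^ (1 / (p - 1)) := ENNReal.rpow_le_rpow hBab (by positivity)

/-- for `2 < p` and `w ∈ B_{p,α}` with constant `B`, and any nonnegative
measurable `h`, the pair `(h w, S_{w,α}(h) w)` satisfies the joint `B_{2,α}` condition with
constant at most `B^{1/(p-1)}`. -/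
theorem joint_B2_bound (α p : ℝ) (hα : -1 < α) (hp : 2 < p)
    (w : ℂ → ℝ) (hw : ∀ z, 0 < w z) (B : ℝ≥0∞)
    (hB : ∀ a b : ℝ, a < b →
      ((∫⁻ z in cbox a b, ENNReal.ofReal (w z) ∂measA α) / measA α (cbox a b)) *
          (((∫⁻ z in cbox a b, (ENNReal.ofReal (w z)) ^ (1 - p / (p - 1)) ∂measA α) /
            measA α (cbox a b)) ^ (p - 1)) ≤ B)
    (h : ℂ → ℝ≥0∞) (hmeas : Measurable h) :
    ∀ a b : ℝ, a < b →
      ((∫⁻ z in cbox a b, h z * ENNReal.ofReal (w z) ∂measA α) / measA α (cbox a b)) *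
          ((∫⁻ z in cbox a b, (Sop α p w h z * ENNReal.ofReal (w z))⁻¹ ∂measA α) /
            measA α (cbox a b)) ≤ B ^ (1 / (p - 1)) :=
  joint_B2_bound_general α p hp w hw B hB h hmeas
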